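/- For every graph H, the countably infinite complete graph K_∞ satisfies K_∞ → (K_∞, H), and there is no (K_∞, H)-minimal graph. -/

import Mathlib

open SimpleGraph

/-- `G` embeds into `H`: an injective graph homomorphism (not necessarily induced). -/
def EmbedsIn {α β : Type*} (G : SimpleGraph α) (H : SimpleGraph β) : Prop :=
  ∃ f : G →g H, Function.Injective f

/-- `G` is self-embeddable: it admits an injective adjacency-preserving self-map whose
image, as a subgraph, is a proper subgraph (strictly smaller edge set). -/
def SelfEmbeddable {α : Type*} (G : SimpleGraph α) : Prop :=
  ∃ f : G →g G, Function.Injective f ∧ Sym2.map f '' G.edgeSet ⊂ G.edgeSet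

/-- `G` is strongly self-embeddable: `G` embeds into `G - v` for every vertex `v`. -/
def StronglySelfEmbeddable {α : Type*} (G : SimpleGraph α) : Prop :=
  ∀ v : α, EmbedsIn G (G.induce ({v}ᶜ : Set α))

/-- The subgraph of `F` consisting of the edges with color `b` under coloring `c`. -/
def colorSubgraph {α : Type*} (F : SimpleGraph α) (c : Sym2 α → Bool) (b : Bool) :
    SimpleGraph α where
  Adj x y := F.Adj x y ∧ c s(x, y) = b
  symm := by
    constructor
    intro x y h
    exact ⟨h.1.symm, by rw [Sym2.eq_swap]; exact h.2⟩
  loopless := by constructor; intro x h; exact F.irrefl h.1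

/-- `F → (G, H)` : every red-blue coloring of the edges of `F` yields a red copy of `G`
or a blue copy of `H` (here `true` = red, `false` = blue). -/
def Arrows {α β γ : Type*} (F : SimpleGraph α) (G : SimpleGraph β) (H : SimpleGraph γ) : Prop :=
  ∀ c : Sym2 α → Bool,
    EmbedsIn G (colorSubgraph F c true) ∨ EmbedsIn H (colorSubgraph F c false)

/-- `F` is `(G,H)`-minimal: it arrows `(G,H)` but no proper subgraph of it does. -/
def RamseyMinimal {α β γ : Type*} (F : SimpleGraph α) (G : SimpleGraph β)
    (H : SimpleGraph γ) : Prop :=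
  Arrows F G H ∧ ∀ F' : SimpleGraph α, F' < F → ¬ Arrows F' G H

/-- `G` has no isolated vertices. -/
def NoIsolated {α : Type*} (G : SimpleGraph α) : Prop := ∀ v, ∃ w, G.Adj v w

/-- The single-edge graph `K₂`. -/
def K2 : SimpleGraph (Fin 2) := ⊤

/-- The matching `nK₂` with `n` pairwise disjoint edges. -/
def Matching (n : ℕ) : SimpleGraph (Fin n × Fin 2) where
  Adj a b := a.1 = b.1 ∧ a.2 ≠ b.2
  symm := by constructor; intro a b h; exact ⟨h.1.symm, h.2.symm⟩
  loopless := by constructor; intro a h; exact h.2 rfl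

/-- The disjoint union `nG` of `n` copies of `G`. -/
def nCopies {V : Type*} (n : ℕ) (G : SimpleGraph V) : SimpleGraph (Fin n × V) where
  Adj a b := a.1 = b.1 ∧ G.Adj a.2 b.2
  symm := by constructor; intro a b h; exact ⟨h.1.symm, h.2.symm⟩
  loopless := by constructor; intro a h; exact G.irrefl h.2

/-- The infinite star `S_∞ = K_{1,∞}`, with center `none`. -/
def InfStar : SimpleGraph (Option ℕ) := SimpleGraph.fromRel (fun a _ => a = none)

/-- The finite star `K_{1,n}`, with center `none`. -/
def StarN (n : ℕ) : SimpleGraph (Option (Fin n)) := SimpleGraph.fromRel (fun a _ => a = none)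

/-- The ray `P_∞` (one-way infinite path) on `ℕ`. -/
def Ray : SimpleGraph ℕ := SimpleGraph.fromRel (fun a b => b = a + 1)

/-- The `k`-ray `P_{k∞}`: `k` rays glued at a common endpoint `none`. -/
def kRay (k : ℕ) : SimpleGraph (Option (Fin k × ℕ)) :=
  SimpleGraph.fromRel (fun a b =>
    (a = none ∧ ∃ i, b = some (i, 0)) ∨ (∃ i n, a = some (i, n) ∧ b = some (i, n + 1)))

/-!
By the infinite Ramsey theorem a two-colouring of `K_∞` has an infinite monochromatic clique,
and every countable graph embeds in it. If `F → (K_∞, H)`, then `F` has an edge `pq` (as `H` has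
one), and `F - pq → (K_∞, H)` still holds: colour `pq` red; a blue `H` avoids `pq`, and a red
`K_∞` can be moved off the vertex `p`, because `K_∞` embeds into `K_∞ - v`.
-/

variable {α β γ κ : Type*}

theorem embedsIn_iff_isContained {G : SimpleGraph β} {K : SimpleGraph α} :
    EmbedsIn G K ↔ G ⊑ K :=
  ⟨fun ⟨f, hf⟩ => ⟨⟨f, hf⟩⟩, fun ⟨f⟩ => ⟨f.toHom, f.injective⟩⟩

theorem exists_injective_monochromatic [Infinite α] [Finite κ] (c : Sym2 α → κ) :
    ∃ (k : κ) (f : ℕ → α), Function.Injective f ∧ ∀ m n, m ≠ n → c s(f m, f n) = k := by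
  -- Colour each `a` by the colour of almost all pairs `s(a, x)` with respect to a
  -- non-principal ultrafilter; the sequence is then built greedily inside the majority class.
  let U := Filter.hyperfilter α
  have hcol : ∀ a, ∃ k, ∀ᶠ x in U, c s(a, x) = k := fun a =>
    Ultrafilter.eventually_exists_iff.1 (.of_forall fun _ => ⟨_, rfl⟩)
  choose col hcol using hcol
  obtain ⟨k, hk⟩ : ∃ k, ∀ᶠ a in U, col a = k :=
    Ultrafilter.eventually_exists_iff.1 (.of_forall fun _ => ⟨_, rfl⟩)
  let r : α → α → Prop := fun x y => x ≠ y ∧ c s(x, y) = k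
  have : Std.Symm r := ⟨fun x y h => ⟨h.1.symm, Sym2.eq_swap ▸ h.2⟩⟩
  obtain ⟨f, -, hf⟩ := exists_seq_of_forall_finset_exists' (fun a => col a = k) r fun s hs => by
    refine (hk.and ((Filter.eventually_all_finset s).2 fun x hx => ?_)).exists
    filter_upwards [hcol x, Filter.hyperfilter_le_cofinite (Filter.eventually_cofinite_ne x)]
      with y hy hne
    exact ⟨hne.symm, hy.trans (hs x hx)⟩
  exact ⟨k, f, fun m n h => by_contra fun hmn => (hf hmn).1 h, fun m n h => (hf h).2⟩

theorem isContained_top_of_countable [Countable β] (G : SimpleGraph β) :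
    G ⊑ (⊤ : SimpleGraph ℕ) := by
  obtain ⟨g, hg⟩ := Countable.exists_injective_nat β
  exact ⟨⟨⟨g, fun h => hg.ne h.ne⟩, hg⟩⟩

theorem top_arrows_of_countable [Infinite α] [Countable β] [Countable γ] (G : SimpleGraph β)
    (H : SimpleGraph γ) : Arrows (⊤ : SimpleGraph α) G H := by
  intro c
  obtain ⟨k, f, hf, hfc⟩ := exists_injective_monochromatic c
  have hK : (⊤ : SimpleGraph ℕ) ⊑ colorSubgraph ⊤ c k :=
    ⟨⟨⟨f, fun {m n} h => ⟨hf.ne h, hfc m n h⟩⟩, hf⟩⟩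
  simp only [embedsIn_iff_isContained]
  cases k
  · exact .inr ((isContained_top_of_countable H).trans hK)
  · exact .inl ((isContained_top_of_countable G).trans hK)

theorem stronglySelfEmbeddable_top : StronglySelfEmbeddable (⊤ : SimpleGraph ℕ) := fun v =>
  ⟨⟨fun n => ⟨n + v + 1, by simp only [Set.mem_compl_singleton_iff]; omega⟩,
    fun {m n} h => by simpa using h⟩, fun m n h => by simpa using h⟩

theorem StronglySelfEmbeddable.isContained_induce_compl {G : SimpleGraph β}
    (hG : StronglySelfEmbeddable G) {K : SimpleGraph α} (h : G ⊑ K) (p : α) :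
    G ⊑ K.induce {p}ᶜ := by
  obtain ⟨f⟩ := h
  by_cases hp : p ∈ Set.range f
  · obtain ⟨v, rfl⟩ := hp
    have hv : Set.MapsTo f ({v}ᶜ : Set β) {f v}ᶜ := fun x hx => f.injective.ne hx
    exact (embedsIn_iff_isContained.1 (hG v)).trans
      ⟨(induceHom f.toHom hv).toCopy (induceHom_injective _ _ f.injective.injOn)⟩
  · have hv : Set.MapsTo f Set.univ {p}ᶜ := fun x _ hx => hp ⟨x, hx⟩
    exact (isContained_congr_left (induceUnivIso G)).1
      ⟨(induceHom f.toHom hv).toCopy (induceHom_injective _ _ f.injective.injOn)⟩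

theorem colorSubgraph_deleteEdges_adj_of_update [DecidableEq α] {F : SimpleGraph α}
    {c : Sym2 α → Bool} {e : Sym2 α} {b b' : Bool} {x y : α}
    (h : (colorSubgraph F (Function.update c e b') b).Adj x y) (hne : s(x, y) ≠ e) :
    (colorSubgraph (F.deleteEdges {e}) c b).Adj x y :=
  ⟨deleteEdges_adj.2 ⟨h.1, hne⟩, by simpa [colorSubgraph, Function.update_of_ne hne] using h.2⟩

theorem Arrows.deleteEdges {F : SimpleGraph α} {G : SimpleGraph β} {H : SimpleGraph γ}
    (hF : Arrows F G H) (hG : StronglySelfEmbeddable G) (p q : α) :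
    Arrows (F.deleteEdges {s(p, q)}) G H := by
  classical
  intro c
  simp only [Arrows, embedsIn_iff_isContained] at hF ⊢
  rcases hF (Function.update c s(p, q) true) with hred | hblue
  · refine .inl ((hG.isContained_induce_compl hred p).trans
      ⟨Hom.toCopy ⟨Subtype.val, fun {x y} h => ?_⟩ Subtype.val_injective⟩)
    refine colorSubgraph_deleteEdges_adj_of_update h fun h' => ?_
    rcases Sym2.eq_iff.1 h' with ⟨hxp, -⟩ | ⟨-, hyp⟩
    exacts [x.2 hxp, y.2 hyp]
  · refine .inr (hblue.mono_right fun x y h => colorSubgraph_deleteEdges_adj_of_update h ?_)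
    intro he
    simpa [colorSubgraph, he] using h.2

theorem Arrows.exists_adj {F : SimpleGraph α} {G : SimpleGraph β} {H : SimpleGraph γ}
    (hF : Arrows F G H) {a b : β} (hab : G.Adj a b) {x y : γ} (hxy : H.Adj x y) :
    ∃ u v, F.Adj u v := by
  rcases hF fun _ => true with ⟨f, -⟩ | ⟨f, -⟩
  exacts [⟨_, _, (f.map_adj hab).1⟩, ⟨_, _, (f.map_adj hxy).1⟩]

theorem not_ramseyMinimal_of_stronglySelfEmbeddable {G : SimpleGraph β} {H : SimpleGraph γ}
    (hG : StronglySelfEmbeddable G) {a b : β} (hab : G.Adj a b) {x y : γ} (hxy : H.Adj x y)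
    (F : SimpleGraph α) : ¬ RamseyMinimal F G H := by
  rintro ⟨hF, hmin⟩
  obtain ⟨p, q, hpq⟩ := hF.exists_adj hab hxy
  refine hmin _ ((deleteEdges_le _).lt_of_ne fun h => ?_) (hF.deleteEdges hG p q)
  rw [← h, deleteEdges_adj] at hpq
  exact hpq.2 rfl

/-- `K_∞ → (K_∞, H)` for every (countable) graph `H`, and there is no
`(K_∞, H)`-minimal graph. -/
theorem stmt13 {W : Type} [Countable W] [Nonempty W] (H : SimpleGraph W)
    (hH : NoIsolated H) :
    Arrows (⊤ : SimpleGraph ℕ) (⊤ : SimpleGraph ℕ) H ∧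
    ∀ (U : Type) (F : SimpleGraph U), ¬ RamseyMinimal F (⊤ : SimpleGraph ℕ) H := by
  obtain ⟨v⟩ := ‹Nonempty W›
  obtain ⟨w, hvw⟩ := hH v
  exact ⟨top_arrows_of_countable _ H, fun U F =>
    not_ramseyMinimal_of_stronglySelfEmbeddable stronglySelfEmbeddable_top
      (by simp : (⊤ : SimpleGraph ℕ).Adj 0 1) hvw F⟩
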